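/- arXiv:1904.02410 — 3 statements merged into one kernel-verified Lean document; each statement's English description precedes it below -/
import Mathlib

section
/- Let Ω ⊆ ℝ² be an open set and let n : Ω → ℝ³ be twice continuously differentiable with |n(x)| = 1 for all x ∈ Ω. Suppose n is conformal, i.e. there is a constant σ ∈ {1,−1} such that ∂₂n(x) = σ n(x) × ∂₁n(x) for all x ∈ Ω. Then n satisfies the harmonic map equation: Δn(x) = −(|∂₁n(x)|² + |∂₂n(x)|²) n(x) for all x ∈ Ω. -/
/-!
Since `|n| = 1`, differentiating `n ⬝ n = 1` gives `n ⬝ ∂₁n = 0`, and differentiating once more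
gives `n ⬝ ∂₁∂₁n = -|∂₁n|²`. Differentiating the conformality relation `∂₂n = σ n × ∂₁n` along
`∂₁` and `∂₂`, and using the symmetry of the mixed partials, expresses `∂₁∂₂n` and `∂₂∂₂n` through
`n`, `∂₁n` and `∂₁∂₁n`. The vector triple product expansion then turns `∂₁∂₁n + ∂₂∂₂n` into
`-2 |∂₁n|² n`, and `|∂₂n| = |n × ∂₁n| = |∂₁n|` because `n ⊥ ∂₁n`.
-/

open Matrix

/-- First partial derivative of a map `ℝ² → ℝ³` along the first coordinate direction. -/
noncomputable def pd1 (f : ℝ × ℝ → (Fin 3 → ℝ)) (x : ℝ × ℝ) : Fin 3 → ℝ :=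
  fderiv ℝ f x (1, 0)

/-- Second partial derivative of a map `ℝ² → ℝ³` along the second coordinate direction. -/
noncomputable def pd2 (f : ℝ × ℝ → (Fin 3 → ℝ)) (x : ℝ × ℝ) : Fin 3 → ℝ :=
  fderiv ℝ f x (0, 1)

open Filter Topology

section Bilinear

variable {𝕜 : Type*} [NontriviallyNormedField 𝕜] [CompleteSpace 𝕜]
  {E F₁ F₂ G : Type*} [NormedAddCommGroup E] [NormedSpace 𝕜 E]
  [NormedAddCommGroup F₁] [NormedSpace 𝕜 F₁] [FiniteDimensional 𝕜 F₁]
  [NormedAddCommGroup F₂] [NormedSpace 𝕜 F₂] [FiniteDimensional 𝕜 F₂]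
  [NormedAddCommGroup G] [NormedSpace 𝕜 G]

theorem LinearMap.fderiv_of_bilinear_apply (B : F₁ →ₗ[𝕜] F₂ →ₗ[𝕜] G) {f : E → F₁} {g : E → F₂}
    {x : E} (hf : DifferentiableAt 𝕜 f x) (hg : DifferentiableAt 𝕜 g x) (v : E) :
    fderiv 𝕜 (fun y => B (f y) (g y)) x v
      = B (fderiv 𝕜 f x v) (g x) + B (f x) (fderiv 𝕜 g x v) := by
  simpa [add_comm] using congr($(B.toContinuousBilinearMap.fderiv_of_bilinear hf hg) v)

end Bilinear

section SecondDerivative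

variable {E F : Type*} [NormedAddCommGroup E] [NormedSpace ℝ E]
  [NormedAddCommGroup F] [NormedSpace ℝ F] {f : E → F} {x : E}

theorem ContDiffAt.differentiableAt_fderiv_apply (hf : ContDiffAt ℝ 2 f x) (w : E) :
    DifferentiableAt ℝ (fun y => fderiv ℝ f y w) x :=
  ((hf.fderiv_right (m := 1) le_rfl).differentiableAt one_ne_zero).clm_apply
    (differentiableAt_const w)

theorem ContDiffAt.fderiv_fderiv_apply_comm (hf : ContDiffAt ℝ 2 f x) (v w : E) :
    fderiv ℝ (fun y => fderiv ℝ f y w) x v = fderiv ℝ (fun y => fderiv ℝ f y v) x w := by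
  have hd : DifferentiableAt ℝ (fderiv ℝ f) x :=
    (hf.fderiv_right (m := 1) le_rfl).differentiableAt one_ne_zero
  rw [fderiv_clm_apply hd (differentiableAt_const w),
    fderiv_clm_apply hd (differentiableAt_const v)]
  simpa using hf.isSymmSndFDerivAt (by simp) v w

end SecondDerivative

section DotProduct

variable {E : Type*} [NormedAddCommGroup E] [NormedSpace ℝ E] {m : Type*} [Fintype m]
  {f g : E → m → ℝ} {x : E} {c : ℝ}

theorem fderiv_dotProduct_add_dotProduct_fderiv_eq_zero
    (h : ∀ᶠ y in 𝓝 x, f y ⬝ᵥ g y = c)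
    (hf : DifferentiableAt ℝ f x) (hg : DifferentiableAt ℝ g x) (v : E) :
    fderiv ℝ f x v ⬝ᵥ g x + f x ⬝ᵥ fderiv ℝ g x v = 0 := by
  have hprod := (dotProductBilin ℝ ℝ).fderiv_of_bilinear_apply hf hg v
  simp only [dotProductBilin_apply_apply] at hprod
  have hconst : (fun y => f y ⬝ᵥ g y) =ᶠ[𝓝 x] fun _ => c := h
  rw [← hprod, hconst.fderiv_eq, fderiv_const_apply, _root_.zero_apply]

theorem dotProduct_fderiv_eq_zero_of_dotProduct_self
    (h : ∀ᶠ y in 𝓝 x, f y ⬝ᵥ f y = c) (hf : DifferentiableAt ℝ f x) (v : E) :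
    f x ⬝ᵥ fderiv ℝ f x v = 0 := by
  have hsum := fderiv_dotProduct_add_dotProduct_fderiv_eq_zero h hf hf v
  rw [dotProduct_comm] at hsum
  linarith

theorem dotProduct_fderiv_fderiv_eq_neg_of_dotProduct_self
    (h : ∀ᶠ y in 𝓝 x, f y ⬝ᵥ f y = c) (hf : ContDiffAt ℝ 2 f x) (v : E) :
    f x ⬝ᵥ fderiv ℝ (fun y => fderiv ℝ f y v) x v = -(fderiv ℝ f x v ⬝ᵥ fderiv ℝ f x v) := by
  have horth : ∀ᶠ y in 𝓝 x, f y ⬝ᵥ fderiv ℝ f y v = 0 := by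
    filter_upwards [h.eventually_nhds, hf.eventually (by simp)] with y hy hfy
    exact dotProduct_fderiv_eq_zero_of_dotProduct_self hy (hfy.differentiableAt two_ne_zero) v
  have hsum := fderiv_dotProduct_add_dotProduct_fderiv_eq_zero horth
    (hf.differentiableAt two_ne_zero) (hf.differentiableAt_fderiv_apply v) v
  linarith

end DotProduct

section CrossProduct

variable {a b : Fin 3 → ℝ}

theorem cross_cross_self_of_dotProduct_eq_zero (hab : a ⬝ᵥ b = 0) :
    a ⨯₃ b ⨯₃ b = -(b ⬝ᵥ b) • a := by
  rw [cross_cross_eq_smul_sub_smul, hab, zero_smul, zero_sub, neg_smul]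

theorem cross_cross_of_dotProduct_self_eq_one (ha : a ⬝ᵥ a = 1) (p : Fin 3 → ℝ) :
    a ⨯₃ (a ⨯₃ p) = (a ⬝ᵥ p) • a - p := by
  rw [cross_cross_eq_smul_sub_smul', ha, one_smul]

theorem cross_dotProduct_cross_of_orthonormal (ha : a ⬝ᵥ a = 1) (hab : a ⬝ᵥ b = 0) :
    a ⨯₃ b ⬝ᵥ a ⨯₃ b = b ⬝ᵥ b := by
  rw [cross_dot_cross, ha, hab]
  ring

/-- `a, b, p, q, s, r` stand for `n, ∂₁n, ∂₁∂₁n, ∂₂n, ∂₁∂₂n, ∂₂∂₂n` at a point. -/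
theorem add_eq_neg_smul_of_conformal_jet {σ : ℝ} (hσ : σ * σ = 1) {p q s r : Fin 3 → ℝ}
    (ha : a ⬝ᵥ a = 1) (hab : a ⬝ᵥ b = 0) (hap : a ⬝ᵥ p = -(b ⬝ᵥ b))
    (hq : q = σ • (a ⨯₃ b)) (hs : s = σ • (b ⨯₃ b + a ⨯₃ p))
    (hr : r = σ • (q ⨯₃ b + a ⨯₃ s)) :
    p + r = -(b ⬝ᵥ b + q ⬝ᵥ q) • a := by
  subst hq hs hr
  simp only [LinearMap.map_smul, LinearMap.smul_apply, cross_self, zero_add, smul_dotProduct,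
    dotProduct_smul, smul_eq_mul, cross_cross_self_of_dotProduct_eq_zero hab,
    cross_cross_of_dotProduct_self_eq_one ha, hap, cross_dotProduct_cross_of_orthonormal ha hab]
  linear_combination (norm := module) hσ • (-(b ⬝ᵥ b) • a - p)

end CrossProduct

/-- A conformal unit-vector field `n : Ω → S²` on an open set `Ω ⊆ ℝ²`
satisfies the harmonic map equation `Δn = -|∇n|² n`. -/
theorem conformal_implies_harmonic
    (Ω : Set (ℝ × ℝ)) (hΩ : IsOpen Ω)
    (n : ℝ × ℝ → (Fin 3 → ℝ)) (hC2 : ContDiffOn ℝ 2 n Ω)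
    (hunit : ∀ x ∈ Ω, n x ⬝ᵥ n x = 1)
    (σ : ℝ) (hσ : σ = 1 ∨ σ = -1)
    (hconf : ∀ x ∈ Ω, pd2 n x = σ • (n x ⨯₃ pd1 n x)) :
    ∀ x ∈ Ω,
      pd1 (pd1 n) x + pd2 (pd2 n) x
        = -(pd1 n x ⬝ᵥ pd1 n x + pd2 n x ⬝ᵥ pd2 n x) • n x := by
  intro x hx
  have hΩx : Ω ∈ 𝓝 x := hΩ.mem_nhds hx
  have hnx : ContDiffAt ℝ 2 n x := hC2.contDiffAt hΩx
  have hn : DifferentiableAt ℝ n x := hnx.differentiableAt two_ne_zero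
  have hn₁ : DifferentiableAt ℝ (pd1 n) x := hnx.differentiableAt_fderiv_apply (1, 0)
  have hunit' : ∀ᶠ y in 𝓝 x, n y ⬝ᵥ n y = 1 := eventually_of_mem hΩx hunit
  have hconf' : pd2 n =ᶠ[𝓝 x] fun y => σ • (n y ⨯₃ pd1 n y) := eventually_of_mem hΩx hconf
  have hd_conf : ∀ v, fderiv ℝ (pd2 n) x v
      = σ • (fderiv ℝ n x v ⨯₃ pd1 n x + n x ⨯₃ fderiv ℝ (pd1 n) x v) := fun v => by
    rw [hconf'.fderiv_eq]
    simpa [smul_add] using (σ • crossProduct).fderiv_of_bilinear_apply hn hn₁ v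
  have hsymm : pd2 (pd1 n) x = pd1 (pd2 n) x := hnx.fderiv_fderiv_apply_comm _ _
  have hσσ : σ * σ = 1 := by rcases hσ with rfl | rfl <;> norm_num
  refine add_eq_neg_smul_of_conformal_jet (s := pd1 (pd2 n) x) hσσ (hunit x hx)
    (dotProduct_fderiv_eq_zero_of_dotProduct_self hunit' hn _)
    (dotProduct_fderiv_fderiv_eq_neg_of_dotProduct_self hunit' hnx _) (hconf x hx)
    (hd_conf (1, 0)) ?_
  rw [← hsymm]
  exact hd_conf (0, 1)
end

section
/- Let Ω ⊆ ℝ² be an open set and let n : Ω → ℝ³ be twice continuously differentiable with |n(x)| = 1 for all x ∈ Ω, and define Q : Ω → S₀ by Q(x) = √(3/2)(n(x)⊗n(x) − (1/3)I). If Q satisfies ΔQ(x) = −(|∂₁Q(x)|² + |∂₂Q(x)|²) Q(x) for all x ∈ Ω (Frobenius norms), then: (a) n satisfies the harmonic map equation Δn(x) = −(|∂₁n(x)|² + |∂₂n(x)|²) n(x) on Ω, and (b) at every point x ∈ Ω one has |∂₁n(x)| = |∂₂n(x)| and ∂₁n(x)·∂₂n(x) = 0. -/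
open Matrix

/-- Componentwise first partial derivative of a matrix-valued map on `ℝ²`. -/
noncomputable def pdM1 (f : ℝ × ℝ → Matrix (Fin 3) (Fin 3) ℝ) (x : ℝ × ℝ) :
    Matrix (Fin 3) (Fin 3) ℝ :=
  Matrix.of fun i j => fderiv ℝ (fun y => f y i j) x (1, 0)

/-- Componentwise second partial derivative of a matrix-valued map on `ℝ²`. -/
noncomputable def pdM2 (f : ℝ × ℝ → Matrix (Fin 3) (Fin 3) ℝ) (x : ℝ × ℝ) :
    Matrix (Fin 3) (Fin 3) ℝ :=
  Matrix.of fun i j => fderiv ℝ (fun y => f y i j) x (0, 1)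

/-- Squared Frobenius norm of a 3×3 real matrix: `|A|² = tr(Aᵀ A)`. -/
noncomputable def frobSq (A : Matrix (Fin 3) (Fin 3) ℝ) : ℝ := (Aᵀ * A).trace

/-- The `Q`-tensor field `Q = √(3/2) (n ⊗ n - (1/3) I)` associated with a director field `n`. -/
noncomputable def Qtensor (n : ℝ × ℝ → (Fin 3 → ℝ)) (x : ℝ × ℝ) : Matrix (Fin 3) (Fin 3) ℝ :=
  Real.sqrt (3 / 2) • (vecMulVec (n x) (n x) - (3 : ℝ)⁻¹ • (1 : Matrix (Fin 3) (Fin 3) ℝ))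

open Filter Topology

/-!
Differentiating `Q = √(3/2)(n ⊗ n - I/3)` twice gives
`ΔQ = √(3/2)(Δn ⊗ n + n ⊗ Δn + 2(∂₁n ⊗ ∂₁n + ∂₂n ⊗ ∂₂n))`, while differentiating `|n|² = 1`
gives `n · ∂ᵢn = 0` and `n · Δn = -|∇n|²`. Testing the equation `ΔQ = μ Q` against `n ⊗ n`
forces `μ = -3|∇n|²`, and then against `n ⊗ y` it yields `Δn = -|∇n|² n`. Testing it against
`∂₁n ⊗ ∂₁n` and `∂₂n ⊗ ∂₂n` gives `2(|∂ᵢn|⁴ + (∂₁n · ∂₂n)²) = |∇n|² |∂ᵢn|²` for `i = 1, 2`,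
whence `|∂₁n| = |∂₂n|` and `∂₁n · ∂₂n = 0`.
-/

theorem dotProduct_vecMulVec_mulVec {ι : Type*} [Fintype ι] (x a b y : ι → ℝ) :
    x ⬝ᵥ (vecMulVec a b *ᵥ y) = (x ⬝ᵥ a) * (b ⬝ᵥ y) := by
  rw [vecMulVec_mulVec, op_smul_eq_smul, dotProduct_smul, smul_eq_mul, mul_comm]

theorem eq_neg_smul_and_conformal_of_vecMulVec_eq {ι : Type*} [Fintype ι] [DecidableEq ι]
    {n a u v : ι → ℝ} {μ : ℝ}
    (hn : n ⬝ᵥ n = 1) (hu : n ⬝ᵥ u = 0) (hv : n ⬝ᵥ v = 0)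
    (ha : n ⬝ᵥ a = -(u ⬝ᵥ u + v ⬝ᵥ v))
    (h : vecMulVec a n + vecMulVec n a + (2 : ℝ) • (vecMulVec u u + vecMulVec v v)
      = μ • (vecMulVec n n - (3 : ℝ)⁻¹ • 1)) :
    a = -(u ⬝ᵥ u + v ⬝ᵥ v) • n ∧ u ⬝ᵥ u = v ⬝ᵥ v ∧ u ⬝ᵥ v = 0 := by
  have quad : ∀ x y : ι → ℝ, (x ⬝ᵥ a) * (n ⬝ᵥ y) + (x ⬝ᵥ n) * (a ⬝ᵥ y)
      + 2 * ((x ⬝ᵥ u) * (u ⬝ᵥ y) + (x ⬝ᵥ v) * (v ⬝ᵥ y))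
      = μ * ((x ⬝ᵥ n) * (n ⬝ᵥ y) - 3⁻¹ * (x ⬝ᵥ y)) := by
    intro x y
    simpa only [add_mulVec, smul_mulVec, sub_mulVec, one_mulVec, dotProduct_add, dotProduct_smul,
      dotProduct_sub, dotProduct_vecMulVec_mulVec, smul_eq_mul]
      using congrArg (fun M => x ⬝ᵥ (M *ᵥ y)) h
  set e := u ⬝ᵥ u + v ⬝ᵥ v with he
  have hun : u ⬝ᵥ n = 0 := by rwa [dotProduct_comm]
  have hvn : v ⬝ᵥ n = 0 := by rwa [dotProduct_comm]
  have hμ : μ = -3 * e := by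
    have := quad n n
    rw [hn, hu, hv, ha, dotProduct_comm a, ha] at this
    linarith
  have ha' : ∀ y, a ⬝ᵥ y = -e * (n ⬝ᵥ y) := by
    intro y
    have := quad n y
    rw [hn, hu, hv, ha, hμ] at this
    linarith
  have hu4 : 2 * ((u ⬝ᵥ u) ^ 2 + (u ⬝ᵥ v) ^ 2) = e * (u ⬝ᵥ u) := by
    have := quad u u
    rw [hu, hun, hμ, dotProduct_comm v u] at this
    linear_combination this
  have hv4 : 2 * ((u ⬝ᵥ v) ^ 2 + (v ⬝ᵥ v) ^ 2) = e * (v ⬝ᵥ v) := by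
    have := quad v v
    rw [hv, hvn, hμ, dotProduct_comm v u] at this
    linear_combination this
  have huv : u ⬝ᵥ u = v ⬝ᵥ v := by
    have : (u ⬝ᵥ u) ^ 2 = (v ⬝ᵥ v) ^ 2 := by linear_combination hu4 - hv4
    exact (pow_left_inj₀ (dotProduct_self_star_nonneg u) (dotProduct_self_star_nonneg v)
      two_ne_zero).1 this
  refine ⟨?_, huv, ?_⟩
  · ext i
    simpa using ha' (Pi.single i 1)
  · have : (u ⬝ᵥ v) ^ 2 = 0 := by
      linear_combination hu4 / 2 - (u ⬝ᵥ u) / 2 * huv - (u ⬝ᵥ u) / 2 * he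
    exact pow_eq_zero_iff two_ne_zero |>.1 this

section Calculus

variable {E ι : Type*} [NormedAddCommGroup E] [NormedSpace ℝ E] {f g : E → ι → ℝ} {x : E}

theorem fderiv_apply_apply (hf : DifferentiableAt ℝ f x) (i : ι) (w : E) :
    fderiv ℝ (fun y => f y i) x w = fderiv ℝ f x w i := by
  rw [fderiv_apply hf]
  rfl

theorem fderiv_mul_apply_apply (hf : DifferentiableAt ℝ f x) (hg : DifferentiableAt ℝ g x)
    (i j : ι) (w : E) :
    fderiv ℝ (fun y => f y i * g y j) x w
      = fderiv ℝ f x w i * g x j + f x i * fderiv ℝ g x w j := by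
  rw [fderiv_fun_mul (differentiableAt_pi.1 hf i) (differentiableAt_pi.1 hg j)]
  simp only [_root_.add_apply, _root_.smul_apply, smul_eq_mul,
    fderiv_apply_apply hf, fderiv_apply_apply hg]
  ring

theorem fderiv_dotProduct_apply [Fintype ι] (hf : DifferentiableAt ℝ f x)
    (hg : DifferentiableAt ℝ g x) (w : E) :
    fderiv ℝ (fun y => f y ⬝ᵥ g y) x w = fderiv ℝ f x w ⬝ᵥ g x + f x ⬝ᵥ fderiv ℝ g x w := by
  have hfg : ∀ i ∈ Finset.univ, DifferentiableAt ℝ (fun y => f y i * g y i) x := fun i _ =>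
    (differentiableAt_pi.1 hf i).mul (differentiableAt_pi.1 hg i)
  simp only [dotProduct, fderiv_fun_sum hfg, _root_.sum_apply,
    fderiv_mul_apply_apply hf hg, Finset.sum_add_distrib]

theorem fderiv_dotProduct_apply_eq_zero_of_eventually_eq [Fintype ι]
    (hf : DifferentiableAt ℝ f x) (hg : DifferentiableAt ℝ g x) {c : ℝ}
    (hc : ∀ᶠ y in 𝓝 x, f y ⬝ᵥ g y = c) (w : E) :
    fderiv ℝ f x w ⬝ᵥ g x + f x ⬝ᵥ fderiv ℝ g x w = 0 := by
  rw [← fderiv_dotProduct_apply hf hg,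
    (show (fun y => f y ⬝ᵥ g y) =ᶠ[𝓝 x] fun _ => c from hc).fderiv_eq,
    fderiv_const_apply, _root_.zero_apply]

theorem dotProduct_fderiv_eq_zero_of_eventually_dotProduct_self_eq [Fintype ι]
    (hf : DifferentiableAt ℝ f x) {c : ℝ} (hc : ∀ᶠ y in 𝓝 x, f y ⬝ᵥ f y = c) (w : E) :
    f x ⬝ᵥ fderiv ℝ f x w = 0 := by
  have := fderiv_dotProduct_apply_eq_zero_of_eventually_eq hf hf hc w
  rw [dotProduct_comm] at this
  linarith

end Calculus

section Qtensor

variable {n : ℝ × ℝ → Fin 3 → ℝ} {x : ℝ × ℝ}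

theorem fderiv_Qtensor_apply (hn : DifferentiableAt ℝ n x) (w : ℝ × ℝ) (i j : Fin 3) :
    fderiv ℝ (fun y => Qtensor n y i j) x w
      = Real.sqrt (3 / 2) * (fderiv ℝ n x w i * n x j + n x i * fderiv ℝ n x w j) := by
  have hQ : (fun y => Qtensor n y i j)
      = fun y => Real.sqrt (3 / 2)
          * (n y i * n y j - (3 : ℝ)⁻¹ * (1 : Matrix (Fin 3) (Fin 3) ℝ) i j) := by
    ext y
    simp [Qtensor, vecMulVec_apply]
  have hnn : DifferentiableAt ℝ (fun y => n y i * n y j) x :=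
    (differentiableAt_pi.1 hn i).mul (differentiableAt_pi.1 hn j)
  rw [hQ, fderiv_const_mul (hnn.sub_const _), fderiv_sub_const, _root_.smul_apply,
    fderiv_mul_apply_apply hn hn, smul_eq_mul]

theorem fderiv_fderiv_Qtensor_apply (hn : ∀ᶠ y in 𝓝 x, DifferentiableAt ℝ n y) {w : ℝ × ℝ}
    (hn' : DifferentiableAt ℝ (fun y => fderiv ℝ n y w) x) (i j : Fin 3) :
    fderiv ℝ (fun y => fderiv ℝ (fun z => Qtensor n z i j) y w) x w
      = Real.sqrt (3 / 2) * (fderiv ℝ (fun y => fderiv ℝ n y w) x w i * n x j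
          + 2 * (fderiv ℝ n x w i * fderiv ℝ n x w j)
          + n x i * fderiv ℝ (fun y => fderiv ℝ n y w) x w j) := by
  have hQ' : (fun y => fderiv ℝ (fun z => Qtensor n z i j) y w) =ᶠ[𝓝 x]
      fun y => Real.sqrt (3 / 2) * (fderiv ℝ n y w i * n y j + n y i * fderiv ℝ n y w j) :=
    hn.mono fun y hy => fderiv_Qtensor_apply hy w i j
  have h1 : DifferentiableAt ℝ (fun y => fderiv ℝ n y w i * n y j) x :=
    (differentiableAt_pi.1 hn' i).mul (differentiableAt_pi.1 hn.self_of_nhds j)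
  have h2 : DifferentiableAt ℝ (fun y => n y i * fderiv ℝ n y w j) x :=
    (differentiableAt_pi.1 hn.self_of_nhds i).mul (differentiableAt_pi.1 hn' j)
  rw [hQ'.fderiv_eq, fderiv_const_mul (h1.fun_add h2), _root_.smul_apply,
    fderiv_fun_add h1 h2, _root_.add_apply, fderiv_mul_apply_apply hn' hn.self_of_nhds,
    fderiv_mul_apply_apply hn.self_of_nhds hn', smul_eq_mul]
  ring

theorem pdM1_pdM1_add_pdM2_pdM2_Qtensor (hn : ∀ᶠ y in 𝓝 x, DifferentiableAt ℝ n y)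
    (hn₁ : DifferentiableAt ℝ (pd1 n) x) (hn₂ : DifferentiableAt ℝ (pd2 n) x) :
    pdM1 (pdM1 (Qtensor n)) x + pdM2 (pdM2 (Qtensor n)) x
      = Real.sqrt (3 / 2) • (vecMulVec (pd1 (pd1 n) x + pd2 (pd2 n) x) (n x)
          + vecMulVec (n x) (pd1 (pd1 n) x + pd2 (pd2 n) x)
          + (2 : ℝ) • (vecMulVec (pd1 n x) (pd1 n x) + vecMulVec (pd2 n x) (pd2 n x))) := by
  unfold pd1 pd2 at *
  ext i j
  simp only [pdM1, pdM2, Matrix.add_apply, of_apply]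
  rw [fderiv_fderiv_Qtensor_apply hn hn₁, fderiv_fderiv_Qtensor_apply hn hn₂]
  simp only [Matrix.smul_apply, Matrix.add_apply, vecMulVec_apply, Pi.add_apply,
    smul_eq_mul]
  ring

end Qtensor

/-- If the `Q`-tensor field `Q = √(3/2)(n ⊗ n - (1/3)I)` associated with a unit-vector
field `n` satisfies the `S⁴`-valued harmonic map equation `ΔQ = -(|∂₁Q|² + |∂₂Q|²) Q`,
then (a) `n` satisfies the harmonic map equation `Δn = -|∇n|² n`, and (b) at every
point `|∂₁n| = |∂₂n|` and `∂₁n · ∂₂n = 0`. -/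
theorem Qtensor_harmonic_implies_conformal
    (Ω : Set (ℝ × ℝ)) (hΩ : IsOpen Ω)
    (n : ℝ × ℝ → (Fin 3 → ℝ)) (hC2 : ContDiffOn ℝ 2 n Ω)
    (hunit : ∀ x ∈ Ω, n x ⬝ᵥ n x = 1)
    (hharm : ∀ x ∈ Ω,
      pdM1 (pdM1 (Qtensor n)) x + pdM2 (pdM2 (Qtensor n)) x
        = -(frobSq (pdM1 (Qtensor n) x) + frobSq (pdM2 (Qtensor n) x)) • Qtensor n x) :
    ∀ x ∈ Ω,
      (pd1 (pd1 n) x + pd2 (pd2 n) x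
          = -(pd1 n x ⬝ᵥ pd1 n x + pd2 n x ⬝ᵥ pd2 n x) • n x)
      ∧ pd1 n x ⬝ᵥ pd1 n x = pd2 n x ⬝ᵥ pd2 n x
      ∧ pd1 n x ⬝ᵥ pd2 n x = 0 := by
  intro x hx
  have hΩx : Ω ∈ 𝓝 x := hΩ.mem_nhds hx
  have hdiff : ∀ᶠ y in 𝓝 x, DifferentiableAt ℝ n y :=
    (hC2.differentiableOn (by norm_num)).eventually_differentiableAt hΩx
  have hdiff' (w : ℝ × ℝ) : DifferentiableAt ℝ (fun y => fderiv ℝ n y w) x :=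
    (((hC2.contDiffAt hΩx).fderiv_right (m := 1) (by norm_num)).differentiableAt
      (by norm_num)).clm_apply (differentiableAt_const w)
  have hunit' : ∀ᶠ y in 𝓝 x, n y ⬝ᵥ n y = 1 := eventually_of_mem hΩx hunit
  have horth (w : ℝ × ℝ) : ∀ᶠ y in 𝓝 x, n y ⬝ᵥ fderiv ℝ n y w = 0 :=
    (hdiff.and (eventually_eventually_nhds.2 hunit')).mono fun y ⟨hy, hy'⟩ =>
      dotProduct_fderiv_eq_zero_of_eventually_dotProduct_self_eq hy hy' w
  have hsecond (w : ℝ × ℝ) : fderiv ℝ n x w ⬝ᵥ fderiv ℝ n x w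
      + n x ⬝ᵥ fderiv ℝ (fun y => fderiv ℝ n y w) x w = 0 :=
    fderiv_dotProduct_apply_eq_zero_of_eventually_eq hdiff.self_of_nhds (hdiff' w) (horth w) w
  have hΔ : n x ⬝ᵥ (pd1 (pd1 n) x + pd2 (pd2 n) x)
      = -(pd1 n x ⬝ᵥ pd1 n x + pd2 n x ⬝ᵥ pd2 n x) := by
    unfold pd1 pd2
    rw [dotProduct_add]
    linear_combination hsecond (1, 0) + hsecond (0, 1)
  have hQ := hharm x hx
  rw [pdM1_pdM1_add_pdM2_pdM2_Qtensor hdiff (hdiff' _) (hdiff' _), Qtensor, smul_comm] at hQ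
  exact eq_neg_smul_and_conformal_of_vecMulVec_eq (hunit x hx) (horth (1, 0)).self_of_nhds
    (horth (0, 1)).self_of_nhds hΔ
    (smul_right_injective _ (Real.sqrt_pos.2 (by norm_num)).ne' hQ)
end

section
/- Let a², b², c² > 0, s₊ = (b² + √(b⁴ + 24a²c²))/(4c²), μ = b²s₊, ν = (1/3)b²s₊ + 2a². Let (n, p, q) be an orthonormal basis of ℝ³ and let u₁, u₂ ∈ ℝ³ satisfy u₁·n = u₂·n = 0. Set A = u₁⊗u₁ + u₂⊗u₂ and define b₁ = −√2 s₊ A:(p⊗p − q⊗q), b₂ = −√2 s₊ A:(p⊗q + q⊗p), b₃ = √6 s₊ (|u₁|² + |u₂|²). Then (b₁² + b₂²)/(2μ) + b₃²/(2ν) = s₊² [ (2/μ)|A|² + (3/ν − 1/μ)(|u₁|² + |u₂|²)² ], where |A| is the Frobenius norm of A. Equivalently, the minimum over ρ ∈ ℝ³ of ½(μρ₁² + μρ₂² + νρ₃²) + b₁ρ₁ + b₂ρ₂ + b₃ρ₃ equals −s₊²[ (2/μ)|A|² + (3/ν − 1/μ)(|u₁|² + |u₂|²)² ]. -/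
/-!
The quadratic form in `ρ` is diagonal with positive weights `μ, μ, ν`, so its minimum is
`-((b₁² + b₂²)/(2μ) + b₃²/(2ν))`. Since `u₁, u₂ ⊥ n`, the matrix `A` lives on the plane spanned by
`p, q`, where `b₁, b₂` measure its traceless part and `b₃` its trace:
`(A:(p⊗p - q⊗q))² + (A:(p⊗q + q⊗p))² = 2|A|² - (tr A)²` and `tr A = |u₁|² + |u₂|²`.
-/

open Matrix

/-- Frobenius inner product of 3×3 real matrices: `A : B = tr(Aᵀ B)`. -/
noncomputable def minner (A B : Matrix (Fin 3) (Fin 3) ℝ) : ℝ := (Aᵀ * B).trace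

theorem dotProduct_eq_sum_of_orthonormal {ι : Type*} [Fintype ι] [DecidableEq ι]
    {e : ι → ι → ℝ} (he : ∀ i j, e i ⬝ᵥ e j = if i = j then 1 else 0) (v w : ι → ℝ) :
    v ⬝ᵥ w = ∑ i, (e i ⬝ᵥ v) * (e i ⬝ᵥ w) := by
  have hM : of e * (of e)ᵀ = 1 := by
    ext i j
    rw [mul_apply', one_apply]
    exact he i j
  calc v ⬝ᵥ w = v ⬝ᵥ ((of e)ᵀ * of e) *ᵥ w := by rw [mul_eq_one_comm.mp hM, one_mulVec]
    _ = (of e *ᵥ v) ⬝ᵥ (of e *ᵥ w) := by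
      rw [← mulVec_mulVec, dotProduct_mulVec, vecMul_transpose]
    _ = ∑ i, (e i ⬝ᵥ v) * (e i ⬝ᵥ w) := rfl

theorem dotProduct_eq_of_orthogonal {n p q : Fin 3 → ℝ}
    (hnn : n ⬝ᵥ n = 1) (hpp : p ⬝ᵥ p = 1) (hqq : q ⬝ᵥ q = 1)
    (hnp : n ⬝ᵥ p = 0) (hnq : n ⬝ᵥ q = 0) (hpq : p ⬝ᵥ q = 0) {v w : Fin 3 → ℝ}
    (hv : v ⬝ᵥ n = 0) (hw : w ⬝ᵥ n = 0) :
    v ⬝ᵥ w = (v ⬝ᵥ p) * (w ⬝ᵥ p) + (v ⬝ᵥ q) * (w ⬝ᵥ q) := by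
  have he : ∀ i j, ![n, p, q] i ⬝ᵥ ![n, p, q] j = if i = j then 1 else 0 := by
    intro i j
    fin_cases i <;> fin_cases j <;>
      simp [dotProduct_comm p n, dotProduct_comm q n, dotProduct_comm q p, *]
  rw [dotProduct_eq_sum_of_orthonormal he, Fin.sum_univ_three]
  simp [dotProduct_comm _ v, dotProduct_comm _ w, hv, hw]

theorem minner_add_left (A B C : Matrix (Fin 3) (Fin 3) ℝ) :
    minner (A + B) C = minner A C + minner B C := by
  simp only [minner, transpose_add, add_mul, trace_add]

theorem minner_add_right (A B C : Matrix (Fin 3) (Fin 3) ℝ) :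
    minner A (B + C) = minner A B + minner A C := by
  simp only [minner, mul_add, trace_add]

theorem minner_sub_right (A B C : Matrix (Fin 3) (Fin 3) ℝ) :
    minner A (B - C) = minner A B - minner A C := by
  simp only [minner, mul_sub, trace_sub]

theorem minner_vecMulVec (u v x y : Fin 3 → ℝ) :
    minner (vecMulVec u v) (vecMulVec x y) = (u ⬝ᵥ x) * (v ⬝ᵥ y) := by
  rw [minner, transpose_vecMulVec, vecMulVec_mul_vecMulVec, trace_vecMulVec, dotProduct_smul,
    smul_eq_mul, dotProduct_comm u x]

/-- `(p⊗p - q⊗q)/√2` and `(p⊗q + q⊗p)/√2` are orthonormal and span the traceless symmetric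
matrices on `n⊥`, so this is Parseval for the traceless part `A - (tr A/2)(p⊗p + q⊗q)`. -/
theorem sq_minner_add_sq_minner_of_orthogonal {n p q : Fin 3 → ℝ}
    (hnn : n ⬝ᵥ n = 1) (hpp : p ⬝ᵥ p = 1) (hqq : q ⬝ᵥ q = 1)
    (hnp : n ⬝ᵥ p = 0) (hnq : n ⬝ᵥ q = 0) (hpq : p ⬝ᵥ q = 0) {u1 u2 : Fin 3 → ℝ}
    (hu1 : u1 ⬝ᵥ n = 0) (hu2 : u2 ⬝ᵥ n = 0) {A : Matrix (Fin 3) (Fin 3) ℝ}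
    (hA : A = vecMulVec u1 u1 + vecMulVec u2 u2) :
    minner A (vecMulVec p p - vecMulVec q q) ^ 2 + minner A (vecMulVec p q + vecMulVec q p) ^ 2
      = 2 * minner A A - (u1 ⬝ᵥ u1 + u2 ⬝ᵥ u2) ^ 2 := by
  have parseval {v w} := @dotProduct_eq_of_orthogonal n p q hnn hpp hqq hnp hnq hpq v w
  simp only [hA, minner_add_left, minner_add_right, minner_sub_right, minner_vecMulVec,
    dotProduct_comm u2 u1, parseval hu1 hu1, parseval hu1 hu2, parseval hu2 hu2]
  ring

theorem isLeast_half_mul_sq_add_mul {m : ℝ} (hm : 0 < m) (b : ℝ) :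
    IsLeast (Set.range fun x => 1 / 2 * (m * x ^ 2) + b * x) (-(b ^ 2 / (2 * m))) := by
  refine ⟨⟨-b / m, by field_simp; ring⟩, ?_⟩
  rintro _ ⟨x, rfl⟩
  have hsquare : 1 / 2 * (m * x ^ 2) + b * x + b ^ 2 / (2 * m) = (m * x + b) ^ 2 / (2 * m) := by
    field_simp; ring
  have hnonneg : 0 ≤ (m * x + b) ^ 2 / (2 * m) := by positivity
  linarith

theorem isLeast_diagonal_quadratic {m₁ m₂ m₃ : ℝ} (h₁ : 0 < m₁) (h₂ : 0 < m₂) (h₃ : 0 < m₃)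
    (b₁ b₂ b₃ : ℝ) :
    IsLeast {y : ℝ | ∃ ρ : Fin 3 → ℝ,
        y = 1 / 2 * (m₁ * ρ 0 ^ 2 + m₂ * ρ 1 ^ 2 + m₃ * ρ 2 ^ 2) + b₁ * ρ 0 + b₂ * ρ 1 + b₃ * ρ 2}
      (-(b₁ ^ 2 / (2 * m₁)) + -(b₂ ^ 2 / (2 * m₂)) + -(b₃ ^ 2 / (2 * m₃))) := by
  obtain ⟨⟨x₁, hx₁⟩, lb₁⟩ := isLeast_half_mul_sq_add_mul h₁ b₁
  obtain ⟨⟨x₂, hx₂⟩, lb₂⟩ := isLeast_half_mul_sq_add_mul h₂ b₂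
  obtain ⟨⟨x₃, hx₃⟩, lb₃⟩ := isLeast_half_mul_sq_add_mul h₃ b₃
  refine ⟨⟨![x₁, x₂, x₃], ?_⟩, ?_⟩
  · simp only [cons_val_zero, cons_val_one, cons_val_two, tail_cons, head_cons]
    linarith
  · rintro _ ⟨ρ, rfl⟩
    have := lb₁ ⟨ρ 0, rfl⟩
    have := lb₂ ⟨ρ 1, rfl⟩
    have := lb₃ ⟨ρ 2, rfl⟩
    linarith

/-- Pointwise identity behind the minimum of the first-order correction energy `H₀[n₀,ρ]`:
with `A = u₁⊗u₁ + u₂⊗u₂` and `b₁, b₂, b₃` the components of `b₀`, one has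
`(b₁² + b₂²)/(2μ) + b₃²/(2ν) = s₊²[(2/μ)|A|² + (3/ν - 1/μ)(|u₁|² + |u₂|²)²]`;
equivalently, the minimum over `ρ ∈ ℝ³` of
`½(μρ₁² + μρ₂² + νρ₃²) + b₁ρ₁ + b₂ρ₂ + b₃ρ₃` equals the negative of that quantity. -/
theorem first_order_correction_minimum
    (a2 b2 c2 : ℝ) (ha : 0 < a2) (hb : 0 < b2) (hc : 0 < c2)
    (splus μ ν : ℝ)
    (hsplus : splus = (b2 + Real.sqrt (b2 ^ 2 + 24 * a2 * c2)) / (4 * c2))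
    (hμ : μ = b2 * splus) (hν : ν = (1 / 3) * b2 * splus + 2 * a2)
    (n p q : Fin 3 → ℝ)
    (hnn : n ⬝ᵥ n = 1) (hpp : p ⬝ᵥ p = 1) (hqq : q ⬝ᵥ q = 1)
    (hnp : n ⬝ᵥ p = 0) (hnq : n ⬝ᵥ q = 0) (hpq : p ⬝ᵥ q = 0)
    (u1 u2 : Fin 3 → ℝ) (hu1 : u1 ⬝ᵥ n = 0) (hu2 : u2 ⬝ᵥ n = 0)
    (A : Matrix (Fin 3) (Fin 3) ℝ) (hA : A = vecMulVec u1 u1 + vecMulVec u2 u2)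
    (bb1 bb2 bb3 : ℝ)
    (hbb1 : bb1 = -(Real.sqrt 2 * splus) * minner A (vecMulVec p p - vecMulVec q q))
    (hbb2 : bb2 = -(Real.sqrt 2 * splus) * minner A (vecMulVec p q + vecMulVec q p))
    (hbb3 : bb3 = Real.sqrt 6 * splus * (u1 ⬝ᵥ u1 + u2 ⬝ᵥ u2)) :
    (bb1 ^ 2 + bb2 ^ 2) / (2 * μ) + bb3 ^ 2 / (2 * ν)
      = splus ^ 2 * ((2 / μ) * minner A A + (3 / ν - 1 / μ) * (u1 ⬝ᵥ u1 + u2 ⬝ᵥ u2) ^ 2)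
    ∧ IsLeast
        {y : ℝ | ∃ ρ : Fin 3 → ℝ,
          y = (1 / 2) * (μ * ρ 0 ^ 2 + μ * ρ 1 ^ 2 + ν * ρ 2 ^ 2)
            + bb1 * ρ 0 + bb2 * ρ 1 + bb3 * ρ 2}
        (-(splus ^ 2 * ((2 / μ) * minner A A
            + (3 / ν - 1 / μ) * (u1 ⬝ᵥ u1 + u2 ⬝ᵥ u2) ^ 2))) := by
  have hs : 0 < splus := by rw [hsplus]; positivity
  have hμ0 : 0 < μ := by rw [hμ]; positivity
  have hν0 : 0 < ν := by rw [hν]; positivity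
  have htraceless := sq_minner_add_sq_minner_of_orthogonal hnn hpp hqq hnp hnq hpq hu1 hu2 hA
  have hsqrt2 : Real.sqrt 2 ^ 2 = 2 := Real.sq_sqrt (by norm_num)
  have hsqrt6 : Real.sqrt 6 ^ 2 = 6 := Real.sq_sqrt (by norm_num)
  have hb12 : bb1 ^ 2 + bb2 ^ 2
      = 2 * splus ^ 2 * (2 * minner A A - (u1 ⬝ᵥ u1 + u2 ⬝ᵥ u2) ^ 2) := by
    rw [hbb1, hbb2, ← htraceless]
    linear_combination splus ^ 2 * (minner A (vecMulVec p p - vecMulVec q q) ^ 2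
      + minner A (vecMulVec p q + vecMulVec q p) ^ 2) * hsqrt2
  have hb3 : bb3 ^ 2 = 6 * splus ^ 2 * (u1 ⬝ᵥ u1 + u2 ⬝ᵥ u2) ^ 2 := by
    rw [hbb3]
    linear_combination splus ^ 2 * (u1 ⬝ᵥ u1 + u2 ⬝ᵥ u2) ^ 2 * hsqrt6
  have hvalue : (bb1 ^ 2 + bb2 ^ 2) / (2 * μ) + bb3 ^ 2 / (2 * ν)
      = splus ^ 2 * ((2 / μ) * minner A A + (3 / ν - 1 / μ) * (u1 ⬝ᵥ u1 + u2 ⬝ᵥ u2) ^ 2) := by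
    rw [hb12, hb3]
    field_simp
    ring
  refine ⟨hvalue, ?_⟩
  convert isLeast_diagonal_quadratic hμ0 hμ0 hν0 bb1 bb2 bb3 using 1
  rw [← hvalue]
  ring
end
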